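/- arXiv:2402.14247 — 4 statements merged into one kernel-verified Lean document; each statement's English description precedes it below -/
import Mathlib

section
/- Let H be a real Hilbert space with Hilbert basis (s_k)_{k∈ℕ}, let Γ : ℕ → ℝ be a nondecreasing sequence, and fix j, l ∈ ℕ with l ≥ 1. Suppose u, w ∈ H satisfy ⟨u, s_k⟩ = (Γ_k − Γ_j)·⟨w, s_k⟩ for every k ∈ ℕ, and ⟨u, s_k⟩ = 0 for every k with j ≤ k < j + l. Then (Γ_{j+l} − Γ_j)·⟨u, w⟩ ≤ ‖u‖². -/
open scoped RealInnerProductSpace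

private lemma aux1 (c a b : ℝ) (hc : 0 ≤ c) (ha : a ≤ 0) :
    c * (a * b * b) ≤ a * b * (a * b) := by
  nlinarith [sq_nonneg (a * b), mul_nonneg (mul_nonneg hc (neg_nonneg.mpr ha)) (sq_nonneg b)]

private lemma aux2 (c a b : ℝ) (hc : 0 ≤ c) (hca : c ≤ a) :
    c * (a * b * b) ≤ a * b * (a * b) := by
  nlinarith [mul_nonneg (mul_nonneg (hc.trans hca) (sub_nonneg.mpr hca)) (sq_nonneg b)]

/-- Hilbert-space core of Proposition 3.2: if `⟪u, s k⟫ = (Γ k − Γ j)·⟪w, s k⟫`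
for all `k`, `⟪u, s k⟫ = 0` for `j ≤ k < j + l`, and `Γ` is nondecreasing, then
`(Γ (j+l) − Γ j)·⟪u, w⟫ ≤ ‖u‖²`. -/
theorem stmt4 {H : Type*} [NormedAddCommGroup H] [InnerProductSpace ℝ H] [CompleteSpace H]
    (s : HilbertBasis ℕ ℝ H) (Γ : ℕ → ℝ) (hΓ : Monotone Γ)
    (j l : ℕ) (hl : 1 ≤ l) (u w : H)
    (h1 : ∀ k, ⟪u, s k⟫ = (Γ k - Γ j) * ⟪w, s k⟫)
    (h2 : ∀ k, j ≤ k → k < j + l → ⟪u, s k⟫ = 0) :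
    (Γ (j + l) - Γ j) * ⟪u, w⟫ ≤ ‖u‖ ^ 2 := by
  have huw := s.hasSum_inner_mul_inner u w
  have huu := s.hasSum_inner_mul_inner u u
  have hnorm : ⟪u, u⟫ = ‖u‖ ^ 2 := real_inner_self_eq_norm_sq u
  rw [← hnorm]
  have hc := huw.mul_left (Γ (j + l) - Γ j)
  refine hasSum_le (fun k => ?_) hc huu
  rcases lt_or_ge k j with hk | hk
  · -- k < j : Γ k - Γ j ≤ 0
    have hle : Γ k - Γ j ≤ 0 := sub_nonpos.mpr (hΓ hk.le)
    have hge : 0 ≤ Γ (j + l) - Γ j := sub_nonneg.mpr (hΓ (Nat.le_add_right j l))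
    have e1 : ⟪s k, w⟫ = ⟪w, s k⟫ := real_inner_comm _ _
    have e2 : ⟪s k, u⟫ = ⟪u, s k⟫ := real_inner_comm _ _
    have e3 := h1 k
    rw [e1, e2, e3]
    exact aux1 _ _ _ hge hle
  rcases lt_or_ge k (j + l) with hk2 | hk2
  · -- j ≤ k < j + l : ⟪u, s k⟫ = 0
    rw [h2 k hk hk2]
    simp
  · -- k ≥ j + l
    have h0 : 0 ≤ Γ (j + l) - Γ j := sub_nonneg.mpr (hΓ (Nat.le_add_right j l))
    have h0' : Γ (j + l) - Γ j ≤ Γ k - Γ j := by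
      have := hΓ hk2; linarith
    have e1 : ⟪s k, w⟫ = ⟪w, s k⟫ := real_inner_comm _ _
    have e2 : ⟪s k, u⟫ = ⟪u, s k⟫ := real_inner_comm _ _
    have e3 := h1 k
    rw [e1, e2, e3]
    exact aux2 _ _ _ h0 h0'
end

section
/- Let Γ : ℕ → ℝ be a nondecreasing sequence, let j, l ∈ ℕ with l ≥ 1, and let μ : ℕ → ℝ be a sequence such that k ↦ μ_k² is summable, k ↦ (Γ_k − Γ_j)²·μ_k² is summable, and μ_k = 0 for all k with j ≤ k < j + l. Then the family k ↦ (Γ_k − Γ_j)·μ_k² is summable and (Γ_{j+l} − Γ_j) · Σ_{k∈ℕ} (Γ_k − Γ_j)·μ_k² ≤ Σ_{k∈ℕ} (Γ_k − Γ_j)²·μ_k². -/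
/-- Sequence form of the key estimate of Proposition 3.2: if `Γ` is
nondecreasing, `μ_k²` and `(Γ k − Γ j)²·μ_k²` are summable, and `μ_k = 0` for
`j ≤ k < j + l`, then `k ↦ (Γ k − Γ j)·μ_k²` is summable and
`(Γ (j+l) − Γ j) · ∑' k, (Γ k − Γ j)·μ_k² ≤ ∑' k, (Γ k − Γ j)²·μ_k²`. -/
theorem stmt5 (Γ : ℕ → ℝ) (hΓ : Monotone Γ) (j l : ℕ) (hl : 1 ≤ l)
    (μ : ℕ → ℝ) (hμ1 : Summable (fun k => μ k ^ 2))
    (hμ2 : Summable (fun k => (Γ k - Γ j) ^ 2 * μ k ^ 2))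
    (hμ0 : ∀ k, j ≤ k → k < j + l → μ k = 0) :
    Summable (fun k => (Γ k - Γ j) * μ k ^ 2) ∧
      (Γ (j + l) - Γ j) * (∑' k, (Γ k - Γ j) * μ k ^ 2) ≤
        ∑' k, (Γ k - Γ j) ^ 2 * μ k ^ 2 := by
  have hc : 0 ≤ Γ (j + l) - Γ j := sub_nonneg.mpr (hΓ (Nat.le_add_right j l))
  have hbig : Summable (fun k => μ k ^ 2 + (Γ k - Γ j) ^ 2 * μ k ^ 2) := hμ1.add hμ2
  have hle : ∀ k, |(Γ k - Γ j) * μ k ^ 2| ≤ μ k ^ 2 + (Γ k - Γ j) ^ 2 * μ k ^ 2 := by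
    intro k
    rw [abs_mul, abs_of_nonneg (sq_nonneg (μ k))]
    rcases le_or_gt (|Γ k - Γ j|) 1 with h | h
    · have : |Γ k - Γ j| * μ k ^ 2 ≤ 1 * μ k ^ 2 :=
        mul_le_mul_of_nonneg_right h (sq_nonneg _)
      nlinarith [sq_nonneg (Γ k - Γ j), sq_nonneg (μ k),
        mul_nonneg (sq_nonneg (Γ k - Γ j)) (sq_nonneg (μ k))]
    · have h2 : |Γ k - Γ j| * μ k ^ 2 ≤ |Γ k - Γ j| ^ 2 * μ k ^ 2 := by
        apply mul_le_mul_of_nonneg_right _ (sq_nonneg _)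
        nlinarith [abs_nonneg (Γ k - Γ j)]
      rw [sq_abs] at h2
      nlinarith [sq_nonneg (μ k)]
  have hsum : Summable (fun k => (Γ k - Γ j) * μ k ^ 2) :=
    Summable.of_abs (Summable.of_nonneg_of_le (fun k => abs_nonneg _) hle hbig)
  refine ⟨hsum, ?_⟩
  rw [← tsum_mul_left]
  apply Summable.tsum_le_tsum _ (hsum.mul_left _) hμ2
  intro k
  rcases lt_or_ge k j with hk | hk
  · have h1 : Γ k - Γ j ≤ 0 := sub_nonpos.mpr (hΓ hk.le)
    have h3 : (Γ (j + l) - Γ j) * ((Γ k - Γ j) * μ k ^ 2) ≤ 0 :=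
      mul_nonpos_of_nonneg_of_nonpos hc
        (mul_nonpos_of_nonpos_of_nonneg h1 (sq_nonneg _))
    have h4 : 0 ≤ (Γ k - Γ j) ^ 2 * μ k ^ 2 := mul_nonneg (sq_nonneg _) (sq_nonneg _)
    linarith
  · rcases lt_or_ge k (j + l) with hk2 | hk2
    · simp [hμ0 k hk hk2]
    · have h1 : Γ (j + l) - Γ j ≤ Γ k - Γ j := by
        have := hΓ hk2; linarith
      have h2 : 0 ≤ Γ k - Γ j := le_trans hc h1
      nlinarith [mul_le_mul_of_nonneg_right
        (mul_le_mul_of_nonneg_right h1 h2) (sq_nonneg (μ k))]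
end

section
/- Let H be a real Hilbert space with Hilbert basis (s_k)_{k∈ℕ}, and let T : H → H be a continuous self-adjoint linear operator with T s_k = Γ_k s_k for all k, where Γ : ℕ → ℝ is nondecreasing. Fix j ∈ ℕ, m ≥ 1, and continuous linear operators B_1, …, B_m : H → H. Then there exists a real orthogonal m×m matrix P = (p_{lt}) such that, setting C_l := Σ_{t=1}^m p_{lt}·B_t, one has Σ_{l=1}^m (Γ_{j+l} − Γ_j)·⟨[T, C_l] s_j, C_l s_j⟩ ≤ Σ_{l=1}^m ‖[T, C_l] s_j‖². -/
/-!
Since `T (s j) = Γ j • s j`, the commutator `[T, C] (s j)` equals `(T - Γ j) v` for `v = C (s j)`.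
Expanding in the eigenbasis, `(ν - μ) ⟪(T - μ) v, v⟫ ≤ ‖(T - μ) v‖²` holds coefficientwise as soon
as `v` has no component along eigenvectors whose eigenvalue lies strictly between `μ` and `ν`,
because `(Γ k - μ) (Γ k - ν) ≥ 0` off that interval. With `μ = Γ j` and `ν = Γ (j + l + 1)`, it
remains to rotate the `B t` so that `C l (s j)` is orthogonal to `s (j + 1), …, s (j + l)`: a QR
decomposition (Gram–Schmidt) of the matrix `⟪B t (s j), s (j + i + 1)⟫` does this for all `l` at once.
-/

open Matrix

open scoped RealInnerProductSpace

section SpectralGap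

variable {ι E : Type*} [NormedAddCommGroup E] [InnerProductSpace ℝ E]

theorem mul_sq_le_sq_of_notMem_Ioo {γ μ ν : ℝ} (c : ℝ) (hμν : μ ≤ ν) (hγ : γ ∉ Set.Ioo μ ν) :
    (ν - μ) * ((γ - μ) * c * c) ≤ (γ - μ) * c * ((γ - μ) * c) := by
  have : 0 ≤ (γ - μ) * (γ - ν) := by
    rw [Set.mem_Ioo, not_and_or, not_lt, not_lt] at hγ
    rcases hγ with h | h
    · exact mul_nonneg_of_nonpos_of_nonpos (by linarith) (by linarith)
    · exact mul_nonneg (by linarith) (by linarith)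
  nlinarith [mul_nonneg this (mul_self_nonneg c)]

theorem HilbertBasis.mul_inner_le_norm_sq_of_eigen (b : HilbertBasis ι ℝ E) {T : E →ₗ[ℝ] E}
    (hT : T.IsSymmetric) {Γ : ι → ℝ} (hTb : ∀ k, T (b k) = Γ k • b k) {μ ν : ℝ} (hμν : μ ≤ ν)
    {v : E} (hv : ∀ k, Γ k ∈ Set.Ioo μ ν → ⟪v, b k⟫ = 0) :
    (ν - μ) * ⟪T v - μ • v, v⟫ ≤ ‖T v - μ • v‖ ^ 2 := by
  set w := T v - μ • v
  have hw : ∀ k, ⟪w, b k⟫ = (Γ k - μ) * ⟪v, b k⟫ := fun k => by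
    rw [inner_sub_left, hT, hTb, real_inner_smul_right, real_inner_smul_left, sub_mul]
  have hle : ∀ k, (ν - μ) * (⟪w, b k⟫ * ⟪b k, v⟫) ≤ ⟪w, b k⟫ * ⟪b k, w⟫ := fun k => by
    rw [real_inner_comm v, real_inner_comm w, hw]
    by_cases hk : Γ k ∈ Set.Ioo μ ν
    · simp [hv k hk]
    · exact mul_sq_le_sq_of_notMem_Ioo _ hμν hk
  rw [← real_inner_self_eq_norm_sq]
  exact hasSum_le hle ((b.hasSum_inner_mul_inner w v).mul_left _) (b.hasSum_inner_mul_inner w w)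

theorem HilbertBasis.mul_inner_le_norm_sq_of_monotone (b : HilbertBasis ℕ ℝ E) {T : E →ₗ[ℝ] E}
    (hT : T.IsSymmetric) {Γ : ℕ → ℝ} (hΓ : Monotone Γ) (hTb : ∀ k, T (b k) = Γ k • b k)
    {j d : ℕ} {v : E} (hv : ∀ i < d, ⟪v, b (j + i + 1)⟫ = 0) :
    (Γ (j + d + 1) - Γ j) * ⟪T v - Γ j • v, v⟫ ≤ ‖T v - Γ j • v‖ ^ 2 := by
  refine b.mul_inner_le_norm_sq_of_eigen hT hTb (hΓ (by omega)) fun k ⟨hjk, hkd⟩ => ?_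
  have hk : j + (k - j - 1) + 1 = k := by have := hΓ.reflect_lt hjk; omega
  rw [← hk]
  exact hv _ (by have := hΓ.reflect_lt hkd; omega)

end SpectralGap

theorem Matrix.exists_mem_orthogonalGroup_isUpperTriangular_mul {ι : Type*} [Fintype ι]
    [LinearOrder ι] [LocallyFiniteOrderBot ι] [WellFoundedLT ι] (A : Matrix ι ι ℝ) :
    ∃ Q ∈ orthogonalGroup ι ℝ, (Q * A).IsUpperTriangular := by
  classical
  let std := EuclideanSpace.basisFun ι ℝ
  let cols : ι → EuclideanSpace ℝ ι := fun i => WithLp.toLp 2 fun t => A t i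
  let e := InnerProductSpace.gramSchmidtOrthonormalBasis finrank_euclideanSpace cols
  refine ⟨e.toBasis.toMatrix std, e.toMatrix_orthonormalBasis_mem_orthogonal std, ?_⟩
  have hA : std.toBasis.toMatrix cols = A := by
    ext t i
    simp [std, cols, Module.Basis.toMatrix_apply]
  rw [← hA, ← std.coe_toBasis, Module.Basis.toMatrix_mul_toMatrix]
  exact InnerProductSpace.gramSchmidtOrthonormalBasis_inv_isUpperTriangular _ _

/-- The index `l : Fin m` stands for the paper's `l + 1 ∈ {1, …, m}`. -/
theorem stmt6_general {H : Type*} [NormedAddCommGroup H] [InnerProductSpace ℝ H]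
    (s : HilbertBasis ℕ ℝ H) (T : H →L[ℝ] H)
    (hT : ∀ x y : H, ⟪T x, y⟫ = ⟪x, T y⟫)
    (Γ : ℕ → ℝ) (hΓ : Monotone Γ) (hTs : ∀ k, T (s k) = Γ k • s k)
    (j m : ℕ) (B : Fin m → H →L[ℝ] H) :
    ∃ P : Matrix (Fin m) (Fin m) ℝ, Pᵀ * P = 1 ∧
      ∑ l : Fin m, (Γ (j + (l : ℕ) + 1) - Γ j) *
          ⟪T ((∑ t, P l t • B t) (s j)) - (∑ t, P l t • B t) (T (s j)),
            (∑ t, P l t • B t) (s j)⟫ ≤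
        ∑ l : Fin m, ‖T ((∑ t, P l t • B t) (s j)) - (∑ t, P l t • B t) (T (s j))‖ ^ 2 := by
  obtain ⟨P, hP, hPA⟩ := exists_mem_orthogonalGroup_isUpperTriangular_mul
    (Matrix.of fun t (i : Fin m) => ⟪B t (s j), s (j + i + 1)⟫)
  refine ⟨P, (mem_orthogonalGroup_iff' _ _).mp hP, Finset.sum_le_sum fun l _ => ?_⟩
  rw [hTs, map_smul]
  refine s.mul_inner_le_norm_sq_of_monotone hT hΓ hTs fun i hil => ?_
  simpa [Matrix.mul_apply, sum_inner, real_inner_smul_left] using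
    hPA (show (⟨i, by omega⟩ : Fin m) < l from hil)

/-- Abstract Proposition 3.2: there is an orthogonal matrix `P` such that
the rotated operators `C l = ∑ t, P l t • B t` satisfy
`∑ l, (Γ (j+l) − Γ j)·⟪[T, C l] (s j), C l (s j)⟫ ≤ ∑ l, ‖[T, C l] (s j)‖²`,
where the index `l : Fin m` corresponds to `l+1 ∈ {1,…,m}`. -/
theorem stmt6 {H : Type*} [NormedAddCommGroup H] [InnerProductSpace ℝ H] [CompleteSpace H]
    (s : HilbertBasis ℕ ℝ H) (T : H →L[ℝ] H)
    (hT : ∀ x y : H, ⟪T x, y⟫ = ⟪x, T y⟫)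
    (Γ : ℕ → ℝ) (hΓ : Monotone Γ) (hTs : ∀ k, T (s k) = Γ k • s k)
    (j m : ℕ) (hm : 1 ≤ m) (B : Fin m → H →L[ℝ] H) :
    ∃ P : Matrix (Fin m) (Fin m) ℝ, Pᵀ * P = 1 ∧
      ∑ l : Fin m, (Γ (j + (l : ℕ) + 1) - Γ j) *
          ⟪T ((∑ t, P l t • B t) (s j)) - (∑ t, P l t • B t) (T (s j)),
            (∑ t, P l t • B t) (s j)⟫ ≤
        ∑ l : Fin m, ‖T ((∑ t, P l t • B t) (s j)) - (∑ t, P l t • B t) (T (s j))‖ ^ 2 :=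
  stmt6_general s T hT Γ hΓ hTs j m B
end

section
/- Let H be a real Hilbert space with Hilbert basis (s_k)_{k∈ℕ}, and let T : H → H be a continuous self-adjoint linear operator with T s_k = Γ_k s_k for all k, where Γ : ℕ → ℝ is nondecreasing. Fix j ∈ ℕ, natural numbers n ≤ m with m ≥ 1, and continuous linear operators B_1, …, B_m : H → H. Assume that for every real orthogonal m×m matrix P = (p_{lt}), setting C_l := Σ_{t=1}^m p_{lt}·B_t, one has Σ_{l=1}^m (Γ_{j+l} − Γ_j)·⟨[T, C_l] s_j, C_l s_j⟩ ≥ Σ_{i=1}^n (Γ_{j+i} − Γ_j). Then Σ_{i=1}^n (Γ_{j+i} − Γ_j) ≤ Σ_{A=1}^m ‖[T, B_A] s_j‖². -/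
open Matrix

open scoped RealInnerProductSpace

/-!
Rotating the `B A` by an orthogonal matrix `P` leaves `∑ ‖[T, B A] s_j‖²` unchanged, so it suffices
to bound each `(Γ_{j+l+1} - Γ_j) ⟪[T, C l] s_j, C l s_j⟫` by `‖[T, C l] s_j‖²`. As
`[T, C l] s_j = (T - Γ_j) C l s_j`, Parseval reduces this to a termwise inequality, which holds as
soon as `C l s_j` has no component along `s_{j+1}, …, s_{j+l}`. Gram–Schmidt applied to the
coefficient vectors `(⟪B A s_j, s_{j+t+1}⟫)_A` yields an orthogonal `P` whose rows achieve this.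
-/

theorem exists_transpose_mul_self_eq_one_dotProduct_eq_zero_of_lt {ι : Type*} [Fintype ι]
    [LinearOrder ι] [LocallyFiniteOrderBot ι] (f : ι → ι → ℝ) :
    ∃ P : Matrix ι ι ℝ, Pᵀ * P = 1 ∧ ∀ l t, t < l → P l ⬝ᵥ f t = 0 := by
  have hdim : Module.finrank ℝ (EuclideanSpace ℝ ι) = Fintype.card ι := finrank_euclideanSpace
  let v : ι → EuclideanSpace ℝ ι := fun t => WithLp.toLp 2 (f t)
  let p := InnerProductSpace.gramSchmidtOrthonormalBasis hdim v
  refine ⟨((EuclideanSpace.basisFun ι ℝ).toBasis.toMatrix p)ᵀ, ?_, fun l t hlt => ?_⟩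
  · simpa using (EuclideanSpace.basisFun ι ℝ).toMatrix_orthonormalBasis_self_mul_conjTranspose p
  · rw [show ((EuclideanSpace.basisFun ι ℝ).toBasis.toMatrix p)ᵀ l = p l from rfl, dotProduct_comm]
    simpa [EuclideanSpace.inner_eq_star_dotProduct] using
      InnerProductSpace.gramSchmidtOrthonormalBasis_inv_triangular hdim v hlt

theorem sum_norm_sq_sum_smul_of_transpose_mul_self_eq_one {E : Type*} [NormedAddCommGroup E]
    [InnerProductSpace ℝ E] {κ ι : Type*} [Fintype κ] [Fintype ι] [DecidableEq ι]
    {P : Matrix κ ι ℝ} (hP : Pᵀ * P = 1) (v : ι → E) :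
    ∑ l, ‖∑ t, P l t • v t‖ ^ 2 = ∑ t, ‖v t‖ ^ 2 := by
  have hcol : ∀ t t', ∑ l, P l t * P l t' = if t = t' then 1 else 0 := fun t t' => by
    simpa [Matrix.mul_apply, Matrix.one_apply] using congrFun (congrFun hP t) t'
  simp_rw [← real_inner_self_eq_norm_sq, sum_inner, inner_sum, real_inner_smul_left,
    real_inner_smul_right]
  calc ∑ l, ∑ t, ∑ t', P l t * (P l t' * ⟪v t, v t'⟫)
      = ∑ t, ∑ t', (∑ l, P l t * P l t') * ⟪v t, v t'⟫ := by
        simp_rw [Finset.sum_mul, mul_assoc]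
        rw [Finset.sum_comm]
        exact Finset.sum_congr rfl fun _ _ => Finset.sum_comm
    _ = ∑ t, ⟪v t, v t⟫ := by simp [hcol]

theorem inner_sub_smul_hilbertBasis {H ι : Type*} [NormedAddCommGroup H] [InnerProductSpace ℝ H]
    (s : HilbertBasis ι ℝ H) {T : H → H} (hT : ∀ x y, ⟪T x, y⟫ = ⟪x, T y⟫) {Γ : ι → ℝ}
    (hTs : ∀ k, T (s k) = Γ k • s k) (μ : ℝ) (x : H) (k : ι) :
    ⟪T x - μ • x, s k⟫ = (Γ k - μ) * ⟪x, s k⟫ := by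
  rw [inner_sub_left, real_inner_smul_left, hT, hTs, real_inner_smul_right]
  ring

theorem mul_inner_sub_smul_le_norm_sq {H ι : Type*} [NormedAddCommGroup H]
    [InnerProductSpace ℝ H] (s : HilbertBasis ι ℝ H) {T : H → H}
    (hT : ∀ x y, ⟪T x, y⟫ = ⟪x, T y⟫) {Γ : ι → ℝ} (hTs : ∀ k, T (s k) = Γ k • s k)
    {μ w : ℝ} (hw : 0 ≤ w) {b : H} (hb : ∀ k, ⟪b, s k⟫ ≠ 0 → Γ k ≤ μ ∨ μ + w ≤ Γ k) :
    w * ⟪T b - μ • b, b⟫ ≤ ‖T b - μ • b‖ ^ 2 := by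
  set u := T b - μ • b
  have hu : ∀ k, ⟪u, s k⟫ = (Γ k - μ) * ⟪b, s k⟫ := inner_sub_smul_hilbertBasis s hT hTs μ b
  rw [← s.tsum_inner_mul_inner u b, ← real_inner_self_eq_norm_sq, ← s.tsum_inner_mul_inner u u,
    ← tsum_mul_left]
  refine (s.summable_inner_mul_inner u b).mul_left w |>.tsum_le_tsum (fun k => ?_)
    (s.summable_inner_mul_inner u u)
  rw [real_inner_comm u (s k), real_inner_comm b (s k), hu]
  by_cases hbk : ⟪b, s k⟫ = 0
  · simp [hbk]
  rcases hb k hbk with hk | hk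
  · nlinarith [mul_nonneg (mul_nonneg hw (sub_nonneg.2 hk)) (sq_nonneg ⟪b, s k⟫),
      sq_nonneg ((Γ k - μ) * ⟪b, s k⟫)]
  · nlinarith [mul_nonneg (mul_nonneg (sub_nonneg.2 hk) (by linarith : 0 ≤ Γ k - μ))
      (sq_nonneg ⟪b, s k⟫)]

theorem mul_inner_sub_smul_le_norm_sq_of_inner_eq_zero {H : Type*} [NormedAddCommGroup H]
    [InnerProductSpace ℝ H] (s : HilbertBasis ℕ ℝ H) {T : H → H}
    (hT : ∀ x y, ⟪T x, y⟫ = ⟪x, T y⟫) {Γ : ℕ → ℝ} (hΓ : Monotone Γ)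
    (hTs : ∀ k, T (s k) = Γ k • s k) (j l : ℕ) {b : H}
    (hb : ∀ t < l, ⟪b, s (j + t + 1)⟫ = 0) :
    (Γ (j + l + 1) - Γ j) * ⟪T b - Γ j • b, b⟫ ≤ ‖T b - Γ j • b‖ ^ 2 := by
  refine mul_inner_sub_smul_le_norm_sq s hT hTs (sub_nonneg.2 (hΓ (by omega))) fun k hk => ?_
  rcases le_or_gt k j with hkj | hjk
  · exact .inl (hΓ hkj)
  obtain ⟨t, rfl⟩ := Nat.exists_eq_add_of_lt hjk
  refine .inr ((add_sub_cancel _ _).le.trans (hΓ ?_))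
  by_contra! htl
  exact hk (hb t (by omega))

theorem stmt12_general {H : Type*} [NormedAddCommGroup H] [InnerProductSpace ℝ H]
    (s : HilbertBasis ℕ ℝ H) (T : H →L[ℝ] H)
    (hT : ∀ x y : H, ⟪T x, y⟫ = ⟪x, T y⟫)
    (Γ : ℕ → ℝ) (hΓ : Monotone Γ) (hTs : ∀ k, T (s k) = Γ k • s k)
    (j n m : ℕ) (B : Fin m → H →L[ℝ] H)
    (hP : ∀ P : Matrix (Fin m) (Fin m) ℝ, Pᵀ * P = 1 →
      ∑ i : Fin n, (Γ (j + (i : ℕ) + 1) - Γ j) ≤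
        ∑ l : Fin m, (Γ (j + (l : ℕ) + 1) - Γ j) *
          ⟪T ((∑ t, P l t • B t) (s j)) - (∑ t, P l t • B t) (T (s j)),
            (∑ t, P l t • B t) (s j)⟫) :
    ∑ i : Fin n, (Γ (j + (i : ℕ) + 1) - Γ j) ≤
      ∑ A : Fin m, ‖T (B A (s j)) - B A (T (s j))‖ ^ 2 := by
  obtain ⟨P, hP_orth, hP_perp⟩ := exists_transpose_mul_self_eq_one_dotProduct_eq_zero_of_lt
    fun (t A : Fin m) => ⟪B A (s j), s (j + t + 1)⟫
  refine (hP P hP_orth).trans ?_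
  rw [← sum_norm_sq_sum_smul_of_transpose_mul_self_eq_one hP_orth]
  refine Finset.sum_le_sum fun l _ => ?_
  have hcomm : T ((∑ t, P l t • B t) (s j)) - (∑ t, P l t • B t) (T (s j)) =
      ∑ t, P l t • (T (B t (s j)) - B t (T (s j))) := by
    simp [smul_sub, Finset.sum_sub_distrib]
  rw [← hcomm, hTs j, map_smul]
  refine mul_inner_sub_smul_le_norm_sq_of_inner_eq_zero s hT hΓ hTs j l fun t ht => ?_
  simpa [sum_inner, real_inner_smul_left, dotProduct] using
    hP_perp l ⟨t, ht.trans l.isLt⟩ ht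

/-- Abstract skeleton of the proof of Theorem 2.4: if for every orthogonal
matrix `P` the rotated operators `C l = ∑ t, P l t • B t` satisfy
`∑ l, (Γ (j+l) − Γ j)·⟪[T, C l] (s j), C l (s j)⟫ ≥ ∑_{i=1}^n (Γ (j+i) − Γ j)`, then
`∑_{i=1}^n (Γ (j+i) − Γ j) ≤ ∑ A, ‖[T, B A] (s j)‖²`.
The index `l : Fin m` corresponds to `l+1 ∈ {1,…,m}` and `i : Fin n` to `i+1 ∈ {1,…,n}`. -/
theorem stmt12 {H : Type*} [NormedAddCommGroup H] [InnerProductSpace ℝ H] [CompleteSpace H]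
    (s : HilbertBasis ℕ ℝ H) (T : H →L[ℝ] H)
    (hT : ∀ x y : H, ⟪T x, y⟫ = ⟪x, T y⟫)
    (Γ : ℕ → ℝ) (hΓ : Monotone Γ) (hTs : ∀ k, T (s k) = Γ k • s k)
    (j n m : ℕ) (hnm : n ≤ m) (hm : 1 ≤ m) (B : Fin m → H →L[ℝ] H)
    (hP : ∀ P : Matrix (Fin m) (Fin m) ℝ, Pᵀ * P = 1 →
      ∑ i : Fin n, (Γ (j + (i : ℕ) + 1) - Γ j) ≤
        ∑ l : Fin m, (Γ (j + (l : ℕ) + 1) - Γ j) *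
          ⟪T ((∑ t, P l t • B t) (s j)) - (∑ t, P l t • B t) (T (s j)),
            (∑ t, P l t • B t) (s j)⟫) :
    ∑ i : Fin n, (Γ (j + (i : ℕ) + 1) - Γ j) ≤
      ∑ A : Fin m, ‖T (B A (s j)) - B A (T (s j))‖ ^ 2 :=
  stmt12_general s T hT Γ hΓ hTs j n m B hP
end
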